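/- If Q is a stateless program and T ∈ Q is one of its threads, then Effects(T ∥ Q*) ⊆ Effects(Q*); that is, duplicating a thread of a stateless program as an extra parallel unstarred copy adds no new effects. -/
import Mathlib


namespace Paper

/-- Threads of the core language. -/
inductive Thread (C : Type) : Type where
  | prim : C → Thread C
  | skip : Thread C
  | seq : Thread C → Thread C → Thread C
  | choice : Thread C → Thread C → Thread C
  | star : Thread C → Thread C
  | atomic : Thread C → Thread C

/-- Heaps: partial maps from variables and addresses to naturals. -/
abbrev Heap := (String ⊕ ℕ) → Option ℕ

def emp : Heap := fun _ => none

/-- Memory-cell (address) part of the domain of a heap. -/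
def addrDom (h : Heap) : Set ℕ := {a | h (Sum.inr a) ≠ none}

/-- Disjointness on memory cells. -/
def Disj (h₁ h₂ : Heap) : Prop := addrDom h₁ ∩ addrDom h₂ = ∅

abbrev Config (C : Type) := Thread C × Heap

/-- Thread-configuration maps (partial over thread identifiers). -/
abbrev Cf (C : Type) := ℕ → Option (Config C)

/-- A state (s, cf) is separated. -/
def Separated {C : Type} (s : Heap) (cf : Cf C) : Prop :=
  (∀ i c, cf i = some c → Disj s c.2) ∧
  (∀ i j ci cj, i ≠ j → cf i = some ci → cf j = some cj → Disj ci.2 cj.2)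

variable {C : Type}

mutual
  /-- Sequential small-step semantics, parameterized by the semantics `prim`
  of primitive commands (relating shared/owned heaps before and after). -/
  inductive SeqStep (prim : C → Heap → Heap → Heap → Heap → Prop) :
      Heap → Config C → Heap → Config C → Prop where
    | primStep {c s o s' o'} : prim c s o s' o' →
        SeqStep prim s (Thread.prim c, o) s' (Thread.skip, o')
    | seqL {s T₁ o s' T₁' o'} (T₂ : Thread C) :
        SeqStep prim s (T₁, o) s' (T₁', o') →
        SeqStep prim s (Thread.seq T₁ T₂, o) s' (Thread.seq T₁' T₂, o')
    | seqSkip {s o} (T : Thread C) :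
        SeqStep prim s (Thread.seq Thread.skip T, o) s (T, o)
    | choiceL {s T₁ o s' T₁' o'} (T₂ : Thread C) :
        SeqStep prim s (T₁, o) s' (T₁', o') →
        SeqStep prim s (Thread.choice T₁ T₂, o) s' (T₁', o')
    | choiceR {s T₂ o s' T₂' o'} (T₁ : Thread C) :
        SeqStep prim s (T₂, o) s' (T₂', o') →
        SeqStep prim s (Thread.choice T₁ T₂, o) s' (T₂', o')
    | starUnfold {s o} (T : Thread C) :
        SeqStep prim s (Thread.star T, o) s (Thread.seq T (Thread.star T), o)
    | starExit {s o} (T : Thread C) :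
        SeqStep prim s (Thread.star T, o) s (Thread.skip, o)
    | atomic {s T o s' o'} :
        SeqSteps prim s (T, o) s' (Thread.skip, o') →
        SeqStep prim s (Thread.atomic T, o) s' (Thread.skip, o')

  /-- Finitely many sequential steps. -/
  inductive SeqSteps (prim : C → Heap → Heap → Heap → Heap → Prop) :
      Heap → Config C → Heap → Config C → Prop where
    | refl {s c} : SeqSteps prim s c s c
    | step {s c s' c' s'' c''} : SeqStep prim s c s' c' →
        SeqSteps prim s' c' s'' c'' → SeqSteps prim s c s'' c''
end

variable (prim : C → Heap → Heap → Heap → Heap → Prop)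

/-- Parallel (program) step: one thread steps sequentially and the
resulting state must be separated. -/
def ParStep (st st' : Heap × Cf C) : Prop :=
  ∃ i c c', st.2 i = some c ∧ SeqStep prim st.1 c st'.1 c' ∧
    st'.2 = Function.update st.2 i (some c') ∧ Separated st'.1 st'.2

def ParSteps : Heap × Cf C → Heap × Cf C → Prop :=
  Relation.ReflTransGen (ParStep prim)

/-- A program is a parallel composition of finitely many threads. -/
abbrev Program (C : Type) := List (Thread C)

/-- `Q*` : Kleene star applied to every thread. -/
def starP (P : Program C) : Program C := P.map Thread.star

/-- Initial thread configurations: each thread with the empty owned heap. -/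
def cfInit (P : Program C) : Cf C := fun i => (P[i]?).map fun T => (T, emp)

/-- Reachable shared heaps of a program from initial shared heap `sinit`. -/
def Reach (sinit : Heap) (P : Program C) : Set Heap :=
  {s | ∃ cf, ParSteps prim (sinit, cfInit P) (s, cf)}

/-- Effects: single-step shared-heap updates along executions. -/
def Effects (sinit : Heap) (P : Program C) : Set (Heap × Heap) :=
  {p | ∃ cf cf', ParSteps prim (sinit, cfInit P) (p.1, cf) ∧
       ParStep prim (p.1, cf) (p.2, cf')}

/-- Statelessness: every thread of `Q`, from any shared heap reachable by `Q*`
with empty owned heap, steps in one step to `(skip, emp)`. -/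
def Stateless (sinit : Heap) (Q : Program C) : Prop :=
  ∀ T ∈ Q, ∀ s ∈ Reach prim sinit (starP Q), ∀ s' c,
    SeqStep prim s (T, emp) s' c → c = (Thread.skip, emp)

/-- Assumption 1: sequential steps preserve separation. -/
def PreservesSep : Prop :=
  ∀ s c s' c', SeqStep prim s c s' c' → Disj s c.2 → Disj s' c'.2

/-- `Q` is a stateless effect summary of `P`. -/
def IsSummary (sinit : Heap) (P Q : Program C) : Prop :=
  Stateless prim sinit Q ∧
  ∀ T ∈ P, Effects prim sinit (T :: starP Q) ⊆ Effects prim sinit (starP Q)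

/-- Sequential-step successors of a set of views. -/
def post (X : Set (Heap × Config C)) : Set (Heap × Config C) :=
  {v' | ∃ v ∈ X, SeqStep prim v.1 v.2 v'.1 v'.2}

/-- Interference successors: replace the shared heap of a view by the result
of one step of the summary `Q` from its initial configuration, subject to
separation of the resulting view. -/
def env (Q : Program C) (X : Set (Heap × Config C)) : Set (Heap × Config C) :=
  {v' | Disj v'.1 v'.2.2 ∧ ∃ s cf', (s, v'.2) ∈ X ∧
        ParStep prim (s, cfInit Q) (v'.1, cf')}

/-- Initial views. -/
def X₀ (sinit : Heap) (P : Program C) : Set (Heap × Config C) :=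
  {v | v.1 = sinit ∧ ∃ T ∈ P, v.2 = (T, emp)}

/-- The least fixed point of the thread-modular analysis with interference
computed by the candidate summary `Q`. -/
def Fix (sinit : Heap) (P Q : Program C) : Set (Heap × Config C) :=
  ⋂₀ {X | X₀ sinit P ⊆ X ∧ post prim X ⊆ X ∧ env prim Q X ⊆ X}

/-- Shared heaps occurring in the fixed point. -/
def FixHeaps (sinit : Heap) (P Q : Program C) : Set Heap :=
  {s | ∃ c, (s, c) ∈ Fix prim sinit P Q}

/-! ### Auxiliary development for Statement 3 -/

lemma aux_disj_emp (s : Heap) : Disj s emp := by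
  simp [Disj, addrDom, emp, Set.eq_empty_iff_forall_notMem]

/-- All owned heaps in a thread-configuration map are empty. -/
def AllEmp (cf : Cf C) : Prop := ∀ i c, cf i = some c → c.2 = emp

lemma aux_sep_of_allEmp (s : Heap) (cf : Cf C) (hA : AllEmp cf) : Separated s cf := by
  constructor
  · intro i c h; rw [hA i c h]; exact aux_disj_emp s
  · intro i j ci cj _ hi hj; rw [hA i ci hi, hA j cj hj]; exact aux_disj_emp emp

lemma aux_allEmp_update {cf : Cf C} (hA : AllEmp cf) {c : Config C} (hc : c.2 = emp) (i : ℕ) :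
    AllEmp (Function.update cf i (some c)) := by
  intro k d hk
  by_cases h : k = i
  · subst h; rw [Function.update_self] at hk; exact (Option.some.inj hk) ▸ hc
  · rw [Function.update_of_ne h] at hk; exact hA k d hk

lemma aux_mkStep {s s' : Heap} {cf : Cf C} (hA : AllEmp cf) {i : ℕ} {c c' : Config C}
    (hc : cf i = some c) (he : c'.2 = emp) (hs : SeqStep prim s c s' c') :
    ParStep prim (s, cf) (s', Function.update cf i (some c')) :=
  ⟨i, c, c', hc, hs, rfl, aux_sep_of_allEmp s' _ (aux_allEmp_update hA he i)⟩

lemma aux_skip_no_step {s s' o : Heap} {c' : Config C}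
    (h : SeqStep prim s (Thread.skip, o) s' c') : False := by
  cases h

/-- The shapes a starred stateless thread can be in. -/
def OkT (U : Thread C) (c : Config C) : Prop :=
  c = (Thread.star U, emp) ∨ c = (Thread.seq U (Thread.star U), emp) ∨
  c = (Thread.seq Thread.skip (Thread.star U), emp) ∨ c = (Thread.skip, emp)

lemma aux_okT_emp {U : Thread C} {c : Config C} (h : OkT U c) : c.2 = emp := by
  rcases h with rfl | rfl | rfl | rfl <;> rfl

/-- Simulation invariant between a run of `T ∥ Q*` (state `cf`) and a run of
    `Q*` (state `cf'`). -/
structure SimInv (sinit : Heap) (Q : Program C) (T : Thread C) (j : ℕ)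
    (s : Heap) (cf cf' : Cf C) : Prop where
  reach : ParSteps prim (sinit, cfInit (starP Q)) (s, cf')
  head : cf 0 = some (T, emp) ∨ cf 0 = some (Thread.skip, emp)
  shape : ∀ i c, cf (i+1) = some c → ∃ U, Q[i]? = some U ∧ OkT U c
  rel : ∀ i, i ≠ j → cf (i+1) = cf' i
  relj : (∃ c₀, cf (j+1) = some c₀ ∧ cf' j = some c₀ ∧ c₀ ≠ (Thread.skip, emp)) ∨
         (cf (j+1) = some (Thread.skip, emp) ∧ cf' j = some (Thread.star T, emp))

lemma SimInv.allEmp' {sinit : Heap} {Q : Program C} {T : Thread C} {j : ℕ}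
    {s : Heap} {cf cf' : Cf C} (inv : SimInv prim sinit Q T j s cf cf') :
    AllEmp cf' := by
  intro i c h
  by_cases hij : i = j
  · subst hij
    rcases inv.relj with ⟨c₀, h1, h2, -⟩ | ⟨h1, h2⟩
    · rw [h] at h2
      obtain ⟨U, -, hok⟩ := inv.shape i c₀ h1
      exact (Option.some.inj h2) ▸ aux_okT_emp hok
    · rw [h] at h2; rw [Option.some.inj h2]
  · have h' : cf (i+1) = some c := (inv.rel i hij).trans h
    obtain ⟨U, -, hok⟩ := inv.shape i c h'
    exact aux_okT_emp hok

lemma aux_update_eq {cf : Cf C} {j : ℕ} {c : Config C} (h : cf j = some c) :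
    Function.update cf j (some c) = cf := by
  funext k
  by_cases hk : k = j
  · subst hk; rw [Function.update_self, h]
  · rw [Function.update_of_ne hk]
lemma aux_cycle {sinit : Heap} {Q : Program C} {T : Thread C} {j : ℕ}
    {s s₂ : Heap} {cf' : Cf C} {c₀ : Config C}
    (hA : AllEmp cf') (hj' : cf' j = some c₀)
    (hc₀ : c₀ = (Thread.star T, emp) ∨ c₀ = (Thread.seq T (Thread.star T), emp) ∨
           c₀ = (Thread.seq Thread.skip (Thread.star T), emp))
    (h0 : SeqStep prim s (T, emp) s₂ (Thread.skip, emp))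
    (reach : ParSteps prim (sinit, cfInit (starP Q)) (s, cf')) :
    (s, s₂) ∈ Effects prim sinit (starP Q) ∧
    ParSteps prim (sinit, cfInit (starP Q)) (s₂, cf') := by
  rcases hc₀ with rfl | rfl | rfl
  · have st1 := aux_mkStep prim hA hj' rfl (SeqStep.starUnfold (s := s) (o := emp) T)
    have hA1 := aux_allEmp_update hA (c := (Thread.seq T (Thread.star T), emp)) rfl j
    have st2 := aux_mkStep prim hA1 (Function.update_self j _ cf') rfl
      (SeqStep.seqL (Thread.star T) h0)
    have hA2 := aux_allEmp_update hA1 (c := (Thread.seq Thread.skip (Thread.star T), emp)) rfl j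
    have st3 := aux_mkStep prim hA2 (Function.update_self j _ _) rfl
      (SeqStep.seqSkip (s := s₂) (o := emp) (Thread.star T))
    have hu : Function.update (Function.update (Function.update cf' j
        (some (Thread.seq T (Thread.star T), emp))) j
        (some (Thread.seq Thread.skip (Thread.star T), emp))) j
        (some (Thread.star T, emp)) = cf' := by
      funext k
      by_cases hk : k = j
      · subst hk; rw [Function.update_self, hj']
      · simp [Function.update_of_ne hk]
    refine ⟨⟨_, _, Relation.ReflTransGen.tail reach st1, st2⟩, ?_⟩
    have := Relation.ReflTransGen.tail (Relation.ReflTransGen.tail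
      (Relation.ReflTransGen.tail reach st1) st2) st3
    rwa [hu] at this
  · have st1 := aux_mkStep prim hA hj' rfl (SeqStep.seqL (Thread.star T) h0)
    have hA1 := aux_allEmp_update hA (c := (Thread.seq Thread.skip (Thread.star T), emp)) rfl j
    have st2 := aux_mkStep prim hA1 (Function.update_self j _ cf') rfl
      (SeqStep.seqSkip (s := s₂) (o := emp) (Thread.star T))
    have hA2 := aux_allEmp_update hA1 (c := (Thread.star T, emp)) rfl j
    have st3 := aux_mkStep prim hA2 (Function.update_self j _ _) rfl
      (SeqStep.starUnfold (s := s₂) (o := emp) T)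
    have hu : Function.update (Function.update (Function.update cf' j
        (some (Thread.seq Thread.skip (Thread.star T), emp))) j
        (some (Thread.star T, emp))) j
        (some (Thread.seq T (Thread.star T), emp)) = cf' := by
      funext k
      by_cases hk : k = j
      · subst hk; rw [Function.update_self, hj']
      · simp [Function.update_of_ne hk]
    refine ⟨⟨_, _, reach, st1⟩, ?_⟩
    have := Relation.ReflTransGen.tail (Relation.ReflTransGen.tail
      (Relation.ReflTransGen.tail reach st1) st2) st3
    rwa [hu] at this
  · have st1 := aux_mkStep prim hA hj' rfl (SeqStep.seqSkip (s := s) (o := emp) (Thread.star T))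
    have hA1 := aux_allEmp_update hA (c := (Thread.star T, emp)) rfl j
    have st2 := aux_mkStep prim hA1 (Function.update_self j _ cf') rfl
      (SeqStep.starUnfold (s := s) (o := emp) T)
    have hA2 := aux_allEmp_update hA1 (c := (Thread.seq T (Thread.star T), emp)) rfl j
    have st3 := aux_mkStep prim hA2 (Function.update_self j _ _) rfl
      (SeqStep.seqL (Thread.star T) h0)
    have hu : Function.update (Function.update (Function.update cf' j
        (some (Thread.star T, emp))) j
        (some (Thread.seq T (Thread.star T), emp))) j
        (some (Thread.seq Thread.skip (Thread.star T), emp)) = cf' := by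
      funext k
      by_cases hk : k = j
      · subst hk; rw [Function.update_self, hj']
      · simp [Function.update_of_ne hk]
    refine ⟨⟨_, _, Relation.ReflTransGen.tail (Relation.ReflTransGen.tail reach st1) st2,
      st3⟩, ?_⟩
    have := Relation.ReflTransGen.tail (Relation.ReflTransGen.tail
      (Relation.ReflTransGen.tail reach st1) st2) st3
    rwa [hu] at this
lemma aux_mirror {sinit : Heap} {Q : Program C} {T : Thread C} {j : ℕ}
    {s s₂ : Heap} {cf cf' : Cf C} {k : ℕ} {c c' : Config C} {U : Thread C}
    (inv : SimInv prim sinit Q T j s cf cf')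
    (hc : cf (k+1) = some c) (hk' : cf' k = some c)
    (hU : Q[k]? = some U) (hok : OkT U c')
    (hne : k = j → c' ≠ (Thread.skip, emp))
    (hstep : SeqStep prim s c s₂ c') :
    (s, s₂) ∈ Effects prim sinit (starP Q) ∧
    ∃ cf₃, SimInv prim sinit Q T j s₂ (Function.update cf (k+1) (some c')) cf₃ := by
  have mst := aux_mkStep prim inv.allEmp' hk' (aux_okT_emp hok) hstep
  refine ⟨⟨cf', _, inv.reach, mst⟩, Function.update cf' k (some c'), ?_⟩
  refine ⟨Relation.ReflTransGen.tail inv.reach mst, ?_, ?_, ?_, ?_⟩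
  · rw [Function.update_of_ne (Ne.symm (Nat.succ_ne_zero k))]; exact inv.head
  · intro i d hd
    by_cases hik : i = k
    · subst hik; rw [Function.update_self] at hd
      exact ⟨U, hU, (Option.some.inj hd) ▸ hok⟩
    · rw [Function.update_of_ne (by omega : i+1 ≠ k+1)] at hd
      exact inv.shape i d hd
  · intro i hi
    by_cases hik : i = k
    · subst hik; rw [Function.update_self, Function.update_self]
    · rw [Function.update_of_ne (by omega : i+1 ≠ k+1), Function.update_of_ne hik]
      exact inv.rel i hi
  · by_cases hkj : k = j
    · subst hkj
      exact Or.inl ⟨c', Function.update_self _ _ _, Function.update_self _ _ _, hne rfl⟩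
    · rcases inv.relj with ⟨c₀, h1, h2, h3⟩ | ⟨h1, h2⟩
      · exact Or.inl ⟨c₀, by rw [Function.update_of_ne (by omega : j+1 ≠ k+1)]; exact h1,
          by rw [Function.update_of_ne (Ne.symm hkj)]; exact h2, h3⟩
      · exact Or.inr ⟨by rw [Function.update_of_ne (by omega : j+1 ≠ k+1)]; exact h1,
          by rw [Function.update_of_ne (Ne.symm hkj)]; exact h2⟩

lemma aux_exitj {sinit : Heap} {Q : Program C} {T : Thread C} {j : ℕ}
    (hj : Q[j]? = some T) {s : Heap} {cf cf' : Cf C}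
    (inv : SimInv prim sinit Q T j s cf cf')
    (hk' : cf' j = some (Thread.star T, emp)) :
    SimInv prim sinit Q T j s (Function.update cf (j+1) (some (Thread.skip, emp))) cf' := by
  refine ⟨inv.reach, ?_, ?_, ?_, ?_⟩
  · rw [Function.update_of_ne (Ne.symm (Nat.succ_ne_zero j))]; exact inv.head
  · intro i d hd
    by_cases hij : i = j
    · subst hij; rw [Function.update_self] at hd
      exact ⟨T, hj, (Option.some.inj hd) ▸ (Or.inr (Or.inr (Or.inr rfl)))⟩
    · rw [Function.update_of_ne (by omega : i+1 ≠ j+1)] at hd; exact inv.shape i d hd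
  · intro i hi
    rw [Function.update_of_ne (by omega : i+1 ≠ j+1)]; exact inv.rel i hi
  · exact Or.inr ⟨Function.update_self _ _ _, hk'⟩
lemma aux_mem_of_getElem? {l : List (Thread C)} {n : ℕ} {a : Thread C}
    (h : l[n]? = some a) : a ∈ l := by
  obtain ⟨hn, rfl⟩ := List.getElem?_eq_some_iff.mp h
  exact List.getElem_mem hn

lemma aux_step_sim {sinit : Heap} {Q : Program C} {T : Thread C} {j : ℕ}
    (hQ : Stateless prim sinit Q) (hj : Q[j]? = some T) (hT : T ∈ Q)
    {s s₂ : Heap} {cf cf₂ cf' : Cf C}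
    (inv : SimInv prim sinit Q T j s cf cf')
    (h : ParStep prim (s, cf) (s₂, cf₂)) :
    (s, s₂) ∈ Effects prim sinit (starP Q) ∧
    ∃ cf₃, SimInv prim sinit Q T j s₂ cf₂ cf₃ := by
  obtain ⟨i, c, c', hc, hstep, hcf₂, -⟩ := h
  have hcf₂' : cf₂ = Function.update cf i (some c') := hcf₂
  subst hcf₂'
  have hc' : cf i = some c := hc
  clear hc
  rename' hc' => hc
  have hstep' : SeqStep prim s c s₂ c' := hstep
  clear hstep
  rename' hstep' => hstep
  cases i with
  | zero =>
    rcases inv.head with hh | hh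
    · rw [hc] at hh
      obtain rfl := Option.some.inj hh
      have hc' : c' = (Thread.skip, emp) := hQ T hT s ⟨cf', inv.reach⟩ s₂ c' hstep
      subst hc'
      rcases inv.relj with ⟨c₀, hj1, hj2, hj3⟩ | ⟨hj1, hj2⟩
      · obtain ⟨U, hU, hok⟩ := inv.shape j c₀ hj1
        rw [show U = T from Option.some.inj (hU.symm.trans hj)] at hok
        have hc₀3 : c₀ = (Thread.star T, emp) ∨ c₀ = (Thread.seq T (Thread.star T), emp) ∨
            c₀ = (Thread.seq Thread.skip (Thread.star T), emp) := by
          rcases hok with h' | h' | h' | h'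
          · exact Or.inl h'
          · exact Or.inr (Or.inl h')
          · exact Or.inr (Or.inr h')
          · exact absurd h' hj3
        obtain ⟨heff, hreach₂⟩ := aux_cycle prim inv.allEmp' hj2 hc₀3 hstep inv.reach
        refine ⟨heff, cf', Relation.ReflTransGen.refl.trans hreach₂, ?_, ?_, ?_, ?_⟩
        · exact Or.inr (Function.update_self 0 _ cf)
        · intro i d hd
          exact inv.shape i d (by rwa [Function.update_of_ne (Nat.succ_ne_zero i)] at hd)
        · intro i hi
          rw [Function.update_of_ne (Nat.succ_ne_zero i)]; exact inv.rel i hi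
        · exact Or.inl ⟨c₀, by rw [Function.update_of_ne (Nat.succ_ne_zero j)]; exact hj1,
            hj2, hj3⟩
      · obtain ⟨heff, hreach₂⟩ := aux_cycle prim inv.allEmp' hj2 (Or.inl rfl) hstep inv.reach
        refine ⟨heff, cf', hreach₂, ?_, ?_, ?_, ?_⟩
        · exact Or.inr (Function.update_self 0 _ cf)
        · intro i d hd
          exact inv.shape i d (by rwa [Function.update_of_ne (Nat.succ_ne_zero i)] at hd)
        · intro i hi
          rw [Function.update_of_ne (Nat.succ_ne_zero i)]; exact inv.rel i hi
        · exact Or.inr ⟨by rw [Function.update_of_ne (Nat.succ_ne_zero j)]; exact hj1, hj2⟩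
    · rw [hc] at hh
      obtain rfl := Option.some.inj hh
      exact (aux_skip_no_step prim hstep).elim
  | succ k =>
    obtain ⟨U, hU, hok⟩ := inv.shape k c hc
    rcases hok with rfl | rfl | rfl | rfl
    · -- c = (star U, emp)
      have hk' : cf' k = some (Thread.star U, emp) := by
        by_cases hkj : k = j
        · subst hkj
          rcases inv.relj with ⟨c₀, h1, h2, h3⟩ | ⟨h1, h2⟩
          · obtain rfl := Option.some.inj (hc.symm.trans h1); exact h2
          · exact absurd (Option.some.inj (hc.symm.trans h1)) (by simp)
        · exact (inv.rel k hkj).symm.trans hc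
      cases hstep with
      | starUnfold =>
        exact aux_mirror prim inv hc hk' hU (Or.inr (Or.inl rfl)) (fun _ => by simp)
          (SeqStep.starUnfold (s := s) (o := emp) U)
      | starExit =>
        by_cases hkj : k = j
        · subst hkj
          rw [show U = T from Option.some.inj (hU.symm.trans hj)] at hk'
          refine ⟨⟨cf', _, inv.reach, aux_mkStep prim inv.allEmp' hk' rfl
            (SeqStep.starExit (s := s) (o := emp) T)⟩, cf', aux_exitj prim hj inv hk'⟩
        · exact aux_mirror prim inv hc hk' hU (Or.inr (Or.inr (Or.inr rfl)))
            (fun h' => absurd h' hkj) (SeqStep.starExit (s := s) (o := emp) U)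
    · -- c = (seq U (star U), emp)
      have hk' : cf' k = some (Thread.seq U (Thread.star U), emp) := by
        by_cases hkj : k = j
        · subst hkj
          rcases inv.relj with ⟨c₀, h1, h2, h3⟩ | ⟨h1, h2⟩
          · obtain rfl := Option.some.inj (hc.symm.trans h1); exact h2
          · exact absurd (Option.some.inj (hc.symm.trans h1)) (by simp)
        · exact (inv.rel k hkj).symm.trans hc
      cases hstep with
      | seqL T₂ hin =>
        have h9 := hQ U (aux_mem_of_getElem? hU) s ⟨cf', inv.reach⟩ s₂ _ hin
        injection h9 with e1 e2
        subst e1; subst e2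
        exact aux_mirror prim inv hc hk' hU (Or.inr (Or.inr (Or.inl rfl)))
          (fun _ => by simp) (SeqStep.seqL (Thread.star U) hin)
      | seqSkip =>
        exact aux_mirror prim inv hc hk' hU (Or.inl rfl) (fun _ => by simp)
          (SeqStep.seqSkip (s := s) (o := emp) (Thread.star Thread.skip))
    · -- c = (seq skip (star U), emp)
      have hk' : cf' k = some (Thread.seq Thread.skip (Thread.star U), emp) := by
        by_cases hkj : k = j
        · subst hkj
          rcases inv.relj with ⟨c₀, h1, h2, h3⟩ | ⟨h1, h2⟩
          · obtain rfl := Option.some.inj (hc.symm.trans h1); exact h2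
          · exact absurd (Option.some.inj (hc.symm.trans h1)) (by simp)
        · exact (inv.rel k hkj).symm.trans hc
      cases hstep with
      | seqL T₂ hin => exact (aux_skip_no_step prim hin).elim
      | seqSkip =>
        exact aux_mirror prim inv hc hk' hU (Or.inl rfl) (fun _ => by simp)
          (SeqStep.seqSkip (s := s) (o := emp) (Thread.star U))
    · -- c = (skip, emp)
      exact (aux_skip_no_step prim hstep).elim
lemma aux_init_inv {sinit : Heap} {Q : Program C} {T : Thread C} {j : ℕ}
    (hj : Q[j]? = some T) :
    SimInv prim sinit Q T j sinit (cfInit (T :: starP Q)) (cfInit (starP Q)) := by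
  refine ⟨Relation.ReflTransGen.refl, ?_, ?_, ?_, ?_⟩
  · exact Or.inl (by simp [cfInit])
  · intro i c h
    simp only [cfInit, starP, List.getElem?_cons_succ, List.getElem?_map] at h
    rcases hQi : Q[i]? with _ | U
    · rw [hQi] at h; simp at h
    · rw [hQi] at h
      simp only [Option.map_some, Option.some.injEq] at h
      exact ⟨U, rfl, Or.inl h.symm⟩
  · intro i hi
    simp [cfInit, starP, List.getElem?_cons_succ]
  · refine Or.inl ⟨(Thread.star T, emp), ?_, ?_, by simp⟩
    · simp [cfInit, starP, List.getElem?_cons_succ, List.getElem?_map, hj]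
    · simp [cfInit, starP, List.getElem?_map, hj]

lemma aux_sim_reach {sinit : Heap} {Q : Program C} {T : Thread C} {j : ℕ}
    (hQ : Stateless prim sinit Q) (hj : Q[j]? = some T) (hT : T ∈ Q) :
    ∀ st : Heap × Cf C, ParSteps prim (sinit, cfInit (T :: starP Q)) st →
      ∃ cf', SimInv prim sinit Q T j st.1 st.2 cf' := by
  intro st h
  induction h with
  | refl => exact ⟨cfInit (starP Q), aux_init_inv prim hj⟩
  | @tail b c hab hbc ih =>
    obtain ⟨cf', inv⟩ := ih
    obtain ⟨s₁, cf₁⟩ := b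
    obtain ⟨s₂, cf₂⟩ := c
    exact (aux_step_sim prim hQ hj hT inv hbc).2
/-- duplicating a thread of a stateless program as an extra
parallel unstarred copy adds no new effects. -/
theorem stateless_does_not_care_for_duplicated_threads
    (hps : PreservesSep prim)
    (sinit : Heap) (Q : Program C) (hQ : Stateless prim sinit Q)
    (T : Thread C) (hT : T ∈ Q) :
    Effects prim sinit (T :: starP Q) ⊆ Effects prim sinit (starP Q) := by
  obtain ⟨n, hn, hgn⟩ := List.mem_iff_getElem.mp hT
  have hj : Q[n]? = some T := by rw [List.getElem?_eq_getElem hn, hgn]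
  intro p hp
  obtain ⟨cf, cf₂, hsteps, hstep⟩ := hp
  obtain ⟨cf', inv⟩ := aux_sim_reach prim hQ hj hT (p.1, cf) hsteps
  exact (aux_step_sim prim hQ hj hT inv hstep).1

end Paper
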